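/- arXiv:2603.29742 — 2 statements merged into one kernel-verified Lean document; each statement's English description precedes it below -/
import Mathlib

section
/- Let (Ω, P) be a probability space and let E = ℝ^d (Euclidean space). Let z₀, ε : Ω → E and ξ_0, …, ξ_{n−1} : Ω → E be measurable random vectors with E[‖z₀‖²] < ∞, and let ᾱ ∈ [0, 1]. For each i ∈ {0, …, n−1}, let f_i : E → E be Lipschitz with constant L_i ≥ 0 and let A_i ≥ 0, B_i ∈ ℝ, σ_i ∈ ℝ be real constants; for each ω ∈ Ω define the ω-dependent n-step reverse map F_ω as the composition, applied in order, of the one-step maps u ↦ A_i • u + B_i • f_i u + σ_i • ξ_i(ω). Let Q : E → E be Lipschitz with constant L_Q ≥ 0, and define the attacked recovered noise ε̂(ω) = Q (F_ω (√ᾱ • z₀(ω) + √(1−ᾱ) • ε(ω))) and the baseline recovered noise ε̃(ω) = Q (F_ω (√(1−ᾱ) • ε(ω))). Then E[‖ε̂ − ε̃‖²] ≤ L_Q² · C_n² · ᾱ · E[‖z₀‖²], where C_n = ∏_{i=0}^{n−1} (A_i + |B_i| · L_i). -/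
open MeasureTheory ProbabilityTheory

/-- The `n`-step reverse iteration of a stochastic diffusion sampler:
`reverseIter A B σ f ξ 0 u = u` and
`reverseIter A B σ f ξ (k+1) u = A k • w + B k • f k w + σ k • ξ k`
where `w = reverseIter A B σ f ξ k u`. -/
noncomputable def reverseIter {E : Type*} [NormedAddCommGroup E] [NormedSpace ℝ E]
    (A B σ : ℕ → ℝ) (f : ℕ → E → E) (ξ : ℕ → E) : ℕ → E → E
  | 0, u => u
  | k + 1, u =>
      A k • reverseIter A B σ f ξ k u + B k • f k (reverseIter A B σ f ξ k u)
        + σ k • ξ k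

lemma reverseIter_lip {E : Type*} [NormedAddCommGroup E] [NormedSpace ℝ E]
    (A B σ : ℕ → ℝ) (f : ℕ → E → E) (ξ : ℕ → E) (L : ℕ → ℝ) (n : ℕ)
    (hL : ∀ i < n, 0 ≤ L i) (hA : ∀ i < n, 0 ≤ A i)
    (hf : ∀ i < n, ∀ u v : E, ‖f i u - f i v‖ ≤ L i * ‖u - v‖)
    (u v : E) :
    ∀ k ≤ n, ‖reverseIter A B σ f ξ k u - reverseIter A B σ f ξ k v‖
      ≤ (∏ i ∈ Finset.range k, (A i + |B i| * L i)) * ‖u - v‖ := by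
  intro k hk
  induction k with
  | zero => simp [reverseIter]
  | succ k ih =>
    have hk' : k < n := hk
    have ihk := ih (le_of_lt hk')
    set w := reverseIter A B σ f ξ k u
    set w' := reverseIter A B σ f ξ k v
    have hstep : reverseIter A B σ f ξ (k+1) u - reverseIter A B σ f ξ (k+1) v
        = A k • (w - w') + B k • (f k w - f k w') := by
      simp only [reverseIter, smul_sub]
      abel
    rw [hstep, Finset.prod_range_succ]
    calc ‖A k • (w - w') + B k • (f k w - f k w')‖
        ≤ ‖A k • (w - w')‖ + ‖B k • (f k w - f k w')‖ := norm_add_le _ _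
      _ = A k * ‖w - w'‖ + |B k| * ‖f k w - f k w'‖ := by
          rw [norm_smul, norm_smul, Real.norm_eq_abs, Real.norm_eq_abs,
            abs_of_nonneg (hA k hk')]
      _ ≤ A k * ‖w - w'‖ + |B k| * (L k * ‖w - w'‖) := by
          gcongr
          exact hf k hk' w w'
      _ = (A k + |B k| * L k) * ‖w - w'‖ := by ring
      _ ≤ (A k + |B k| * L k) * ((∏ i ∈ Finset.range k, (A i + |B i| * L i)) * ‖u - v‖) := by
          have h1 := hA k hk'
          have h2 := hL k hk'
          gcongr
      _ = (∏ i ∈ Finset.range k, (A i + |B i| * L i)) * (A k + |B k| * L k) * ‖u - v‖ := by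
          ring

/-- **Decoupling from the source latent.** The attacked recovered noise
`ε̂(ω) = Q (F_ω (√ᾱ • z₀ ω + √(1-ᾱ) • ε ω))` and the baseline recovered noise
`ε̃(ω) = Q (F_ω (√(1-ᾱ) • ε ω))` satisfy
`E[‖ε̂ - ε̃‖²] ≤ L_Q² * C_n² * ᾱ * E[‖z₀‖²]`
where `C_n = ∏_{i<n} (A i + |B i| * L i)`. -/
theorem shift_decoupling_from_source_latent
    {Ω : Type*} [MeasureSpace Ω] [IsProbabilityMeasure (ℙ : Measure Ω)]
    (d n : ℕ)
    (z₀ ε : Ω → EuclideanSpace ℝ (Fin d))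
    (ξ : ℕ → Ω → EuclideanSpace ℝ (Fin d))
    (hz₀ : Measurable z₀) (hε : Measurable ε) (hξ : ∀ i, Measurable (ξ i))
    (hz₀sq : Integrable (fun ω => ‖z₀ ω‖ ^ 2) ℙ)
    (abar : ℝ) (habar : abar ∈ Set.Icc (0 : ℝ) 1)
    (f : ℕ → EuclideanSpace ℝ (Fin d) → EuclideanSpace ℝ (Fin d))
    (L A B σ : ℕ → ℝ)
    (hL : ∀ i < n, 0 ≤ L i) (hA : ∀ i < n, 0 ≤ A i)
    (hf : ∀ i < n, ∀ u v : EuclideanSpace ℝ (Fin d),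
      ‖f i u - f i v‖ ≤ L i * ‖u - v‖)
    (Q : EuclideanSpace ℝ (Fin d) → EuclideanSpace ℝ (Fin d))
    (LQ : ℝ) (hLQ : 0 ≤ LQ)
    (hQ : ∀ u v : EuclideanSpace ℝ (Fin d), ‖Q u - Q v‖ ≤ LQ * ‖u - v‖) :
    ∫ ω, ‖Q (reverseIter A B σ f (fun i => ξ i ω) n
              (Real.sqrt abar • z₀ ω + Real.sqrt (1 - abar) • ε ω))
          - Q (reverseIter A B σ f (fun i => ξ i ω) n
              (Real.sqrt (1 - abar) • ε ω))‖ ^ 2 ∂ℙ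
      ≤ LQ ^ 2 * (∏ i ∈ Finset.range n, (A i + |B i| * L i)) ^ 2 * abar
          * ∫ ω, ‖z₀ ω‖ ^ 2 ∂ℙ := by
  obtain ⟨h0, h1⟩ := habar
  set C : ℝ := ∏ i ∈ Finset.range n, (A i + |B i| * L i) with hC
  have hCnn : 0 ≤ C := by
    apply Finset.prod_nonneg
    intro i hi
    have := hA i (Finset.mem_range.mp hi)
    have := hL i (Finset.mem_range.mp hi)
    positivity
  have hpt : ∀ ω, ‖Q (reverseIter A B σ f (fun i => ξ i ω) n
              (Real.sqrt abar • z₀ ω + Real.sqrt (1 - abar) • ε ω))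
          - Q (reverseIter A B σ f (fun i => ξ i ω) n
              (Real.sqrt (1 - abar) • ε ω))‖ ^ 2
        ≤ LQ ^ 2 * C ^ 2 * abar * ‖z₀ ω‖ ^ 2 := by
    intro ω
    set u := Real.sqrt abar • z₀ ω + Real.sqrt (1 - abar) • ε ω
    set v := Real.sqrt (1 - abar) • ε ω
    have huv : u - v = Real.sqrt abar • z₀ ω := by simp [u, v]
    have h1' : ‖Q (reverseIter A B σ f (fun i => ξ i ω) n u)
        - Q (reverseIter A B σ f (fun i => ξ i ω) n v)‖
        ≤ LQ * (C * ‖u - v‖) := by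
      calc _ ≤ LQ * ‖reverseIter A B σ f (fun i => ξ i ω) n u
            - reverseIter A B σ f (fun i => ξ i ω) n v‖ := hQ _ _
        _ ≤ LQ * (C * ‖u - v‖) := by
            gcongr
            exact reverseIter_lip A B σ f _ L n hL hA hf u v n le_rfl
    have hnorm : ‖u - v‖ = Real.sqrt abar * ‖z₀ ω‖ := by
      rw [huv, norm_smul, Real.norm_eq_abs, abs_of_nonneg (Real.sqrt_nonneg _)]
    have := pow_le_pow_left₀ (norm_nonneg _) h1' 2
    calc ‖Q (reverseIter A B σ f (fun i => ξ i ω) n u)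
        - Q (reverseIter A B σ f (fun i => ξ i ω) n v)‖ ^ 2
        ≤ (LQ * (C * ‖u - v‖)) ^ 2 := this
      _ = LQ ^ 2 * C ^ 2 * abar * ‖z₀ ω‖ ^ 2 := by
          rw [hnorm]
          rw [show (LQ * (C * (Real.sqrt abar * ‖z₀ ω‖))) ^ 2
            = LQ ^ 2 * C ^ 2 * (Real.sqrt abar ^ 2) * ‖z₀ ω‖ ^ 2 by ring,
            Real.sq_sqrt h0]
  calc ∫ ω, ‖Q (reverseIter A B σ f (fun i => ξ i ω) n
              (Real.sqrt abar • z₀ ω + Real.sqrt (1 - abar) • ε ω))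
          - Q (reverseIter A B σ f (fun i => ξ i ω) n
              (Real.sqrt (1 - abar) • ε ω))‖ ^ 2 ∂ℙ
      ≤ ∫ ω, LQ ^ 2 * C ^ 2 * abar * ‖z₀ ω‖ ^ 2 ∂ℙ := by
        apply integral_mono_of_nonneg
        · exact Filter.Eventually.of_forall fun ω => by positivity
        · exact hz₀sq.const_mul _
        · exact Filter.Eventually.of_forall hpt
    _ = LQ ^ 2 * C ^ 2 * abar * ∫ ω, ‖z₀ ω‖ ^ 2 ∂ℙ := integral_const_mul _ _
end

section
/- Let (Ω, P) be a probability space, let E = ℝ^d, and let X, Y, W : Ω → E be square-integrable measurable random vectors such that Y and W are independent and E[‖X − Y‖²] ≤ Δ for some Δ ≥ 0. Then there exists a probability measure π on (E × E) × (E × E) whose first marginal equals the joint law of (X, W), whose second marginal equals the product measure (law of X) ⊗ (law of W), and which satisfies (∫ ‖p − q‖² dπ((p, q)))^{1/2} ≤ 2 · √Δ, where the norm on E × E is the Euclidean product norm. -/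
/-!
Let `X'` be drawn from the conditional law of `X` given `Y`, using fresh randomness. Then
`(Y, X')` has the law of `(Y, X)`, and `X'` is a function of `Y` and noise independent of `W`,
so `(X', W)` has law `L(X) ⊗ L(W)`. Coupling `(X, W)` with `(X', W)` costs `E‖X - X'‖²`, and
Minkowski's inequality in `L²` gives `‖X - X'‖₂ ≤ ‖X - Y‖₂ + ‖Y - X'‖₂ = 2 ‖X - Y‖₂ ≤ 2√Δ`.
-/

open MeasureTheory ProbabilityTheory

section LpNorm

variable {α β E : Type*} [MeasurableSpace α] [MeasurableSpace β] [NormedAddCommGroup E]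
  {μ : Measure α} {ν : Measure β}

lemma lpNorm_comp_measurePreserving {f : α → β} {g : β → E} {p : ENNReal}
    (hg : AEStronglyMeasurable g ν) (hf : MeasurePreserving f μ ν) :
    lpNorm (g ∘ f) p μ = lpNorm g p ν := by
  rw [← toReal_eLpNorm hg, ← toReal_eLpNorm (hg.comp_measurePreserving hf),
    eLpNorm_comp_measurePreserving hg hf]

lemma sqrt_integral_norm_sq_eq_lpNorm {f : α → E} (hf : AEStronglyMeasurable f μ) :
    √(∫ x, ‖f x‖ ^ 2 ∂μ) = lpNorm f 2 μ := by
  rw [lpNorm_eq_integral_norm_rpow_toReal two_ne_zero ENNReal.ofNat_ne_top hf, Real.sqrt_eq_rpow]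
  norm_num

end LpNorm

section Resampling

variable {Ω α β γ : Type*} [MeasurableSpace Ω] [MeasurableSpace α] [StandardBorelSpace α]
  [Nonempty α] [MeasurableSpace β] [MeasurableSpace γ] {μ : Measure Ω} {X : Ω → α} {Y : Ω → β}

/-- The joint law of `(ω, X')`, where `X'` is drawn from the conditional law of `X` given
`Y = Y ω`, independently of everything else. -/
noncomputable def resampleGiven (μ : Measure Ω) [IsFiniteMeasure μ] (X : Ω → α) (Y : Ω → β)
    (hY : Measurable Y) : Measure (Ω × α) :=
  μ ⊗ₘ (condDistrib X Y μ).comap Y hY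

variable [IsFiniteMeasure μ] (hY : Measurable Y)

instance [IsProbabilityMeasure μ] : IsProbabilityMeasure (resampleGiven μ X Y hY) := by
  unfold resampleGiven; infer_instance

lemma resampleGiven_apply_prod {s : Set Ω} {t : Set α} (hs : MeasurableSet s)
    (ht : MeasurableSet t) :
    resampleGiven μ X Y hY (s ×ˢ t) = ∫⁻ ω in s, condDistrib X Y μ (Y ω) t ∂μ :=
  Measure.compProd_apply_prod hs ht

lemma measurePreserving_fst_resampleGiven :
    MeasurePreserving Prod.fst (resampleGiven μ X Y hY) μ :=
  ⟨measurable_fst, Measure.fst_compProd μ _⟩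

lemma map_resampleGiven_eq_map_prodMk (hX : AEMeasurable X μ) :
    (resampleGiven μ X Y hY).map (fun q ↦ (Y q.1, q.2)) = μ.map (fun ω ↦ (Y ω, X ω)) := by
  rw [← compProd_map_condDistrib hX]
  ext s hs
  have hYs : MeasurableSet ((fun q : Ω × α ↦ (Y q.1, q.2)) ⁻¹' s) :=
    (hY.comp measurable_fst).prodMk measurable_snd hs
  rw [Measure.map_apply (by fun_prop) hs, resampleGiven, Measure.compProd_apply hYs,
    Measure.compProd_apply hs, lintegral_map (Kernel.measurable_kernel_prodMk_left hs) hY]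
  rfl

lemma map_snd_resampleGiven (hX : AEMeasurable X μ) :
    (resampleGiven μ X Y hY).map Prod.snd = μ.map X :=
  calc (resampleGiven μ X Y hY).map Prod.snd
      = ((resampleGiven μ X Y hY).map (fun q ↦ (Y q.1, q.2))).snd := by
        rw [Measure.snd, Measure.map_map measurable_snd (by fun_prop)]; rfl
    _ = μ.map X := by
        rw [map_resampleGiven_eq_map_prodMk hY hX, Measure.snd_map_prodMk₀ hY.aemeasurable]

lemma map_resampleGiven_eq_prod_of_indepFun {W : Ω → γ} (hX : AEMeasurable X μ)
    (hW : Measurable W) (hYW : IndepFun Y W μ) :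
    (resampleGiven μ X Y hY).map (fun q ↦ (q.2, W q.1)) = (μ.map X).prod (μ.map W) := by
  refine (Measure.prod_eq fun s t hs ht ↦ ?_).symm
  have hpre : (fun q : Ω × α ↦ (q.2, W q.1)) ⁻¹' (s ×ˢ t) = (W ⁻¹' t) ×ˢ s := by
    ext q; simp [and_comm]
  set f : Ω → ENNReal := fun ω ↦ condDistrib X Y μ (Y ω) s
  set g : Ω → ENNReal := t.indicator 1 ∘ W
  have hf : Measurable f := (Kernel.measurable_coe _ hs).comp hY
  have hg : Measurable g := (measurable_one.indicator ht).comp hW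
  have hfg : IndepFun f g μ :=
    hYW.comp (Kernel.measurable_coe _ hs) (measurable_one.indicator ht)
  have hfX : ∫⁻ ω, f ω ∂μ = μ.map X s := by
    rw [← map_snd_resampleGiven hY hX, Measure.map_apply measurable_snd hs,
      ← Set.univ_prod, resampleGiven_apply_prod hY MeasurableSet.univ hs, Measure.restrict_univ]
  have hgW : ∫⁻ ω, g ω ∂μ = μ.map W t := by
    rw [← lintegral_indicator_one ht, lintegral_map (measurable_one.indicator ht) hW]; rfl
  calc (resampleGiven μ X Y hY).map (fun q ↦ (q.2, W q.1)) (s ×ˢ t)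
      = ∫⁻ ω, (f * g) ω ∂μ := by
        rw [Measure.map_apply (by fun_prop) (hs.prod ht), hpre,
          resampleGiven_apply_prod hY (hW ht) hs, ← lintegral_indicator (hW ht)]
        refine lintegral_congr fun ω ↦ ?_
        by_cases hω : W ω ∈ t <;> simp [hω, f, g]
    _ = μ.map X s * μ.map W t := by
        rw [lintegral_mul_eq_lintegral_mul_lintegral_of_indepFun hf hg hfg, hfX, hgW]

end Resampling

section TransportCost

variable {Ω E : Type*} [MeasurableSpace Ω] {μ : Measure Ω} [IsFiniteMeasure μ]
  [NormedAddCommGroup E] [MeasurableSpace E] [BorelSpace E] [SecondCountableTopology E]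
  [CompleteSpace E] {X Y : Ω → E}

lemma lpNorm_sub_resampleGiven_le (hX : Measurable X) (hY : Measurable Y) {p : ENNReal}
    (hp : 1 ≤ p) (hXY : MemLp (X - Y) p μ) :
    lpNorm (fun q ↦ X q.1 - q.2) p (resampleGiven μ X Y hY) ≤ 2 * lpNorm (X - Y) p μ := by
  have hfst := measurePreserving_fst_resampleGiven hY (X := X) (μ := μ)
  have hresample : MeasurePreserving (fun q ↦ (Y q.1, q.2)) (resampleGiven μ X Y hY)
      (μ.map fun ω ↦ (Y ω, X ω)) :=
    ⟨by fun_prop, map_resampleGiven_eq_map_prodMk hY hX.aemeasurable⟩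
  have hjoint : MeasurePreserving (fun ω ↦ (Y ω, X ω)) μ (μ.map fun ω ↦ (Y ω, X ω)) :=
    ⟨by fun_prop, rfl⟩
  have hsub : AEStronglyMeasurable (fun z : E × E ↦ z.1 - z.2) (μ.map fun ω ↦ (Y ω, X ω)) :=
    (continuous_fst.sub continuous_snd).aestronglyMeasurable
  have hXY_fst :
      lpNorm (fun q ↦ X q.1 - Y q.1) p (resampleGiven μ X Y hY) = lpNorm (X - Y) p μ :=
    lpNorm_comp_measurePreserving hXY.aestronglyMeasurable hfst
  have hYX_fst :
      lpNorm (fun q ↦ Y q.1 - q.2) p (resampleGiven μ X Y hY) = lpNorm (X - Y) p μ :=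
    calc lpNorm (fun q ↦ Y q.1 - q.2) p (resampleGiven μ X Y hY)
        = lpNorm (fun z : E × E ↦ z.1 - z.2) p (μ.map fun ω ↦ (Y ω, X ω)) :=
          lpNorm_comp_measurePreserving hsub hresample
      _ = lpNorm (Y - X) p μ := (lpNorm_comp_measurePreserving hsub hjoint).symm
      _ = lpNorm (X - Y) p μ := lpNorm_sub_comm Y X p μ
  calc lpNorm (fun q ↦ X q.1 - q.2) p (resampleGiven μ X Y hY)
      = lpNorm ((fun q ↦ X q.1 - Y q.1) + fun q ↦ Y q.1 - q.2) p (resampleGiven μ X Y hY) := by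
        congr 1; ext; simp
    _ ≤ _ := lpNorm_add_le (by exact hXY.comp_measurePreserving hfst) hp
    _ = 2 * lpNorm (X - Y) p μ := by rw [hXY_fst, hYX_fst]; ring

end TransportCost

theorem coupling_bound_product_law_general
    {Ω : Type*} [MeasureSpace Ω] [IsProbabilityMeasure (ℙ : Measure Ω)]
    (d : ℕ) (X Y W : Ω → EuclideanSpace ℝ (Fin d))
    (hX : Measurable X) (hY : Measurable Y) (hW : Measurable W)
    (hX2 : MemLp X 2 ℙ) (hY2 : MemLp Y 2 ℙ)
    (hindep : IndepFun Y W ℙ)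
    (Δ : ℝ)
    (hXY : ∫ ω, ‖X ω - Y ω‖ ^ 2 ∂ℙ ≤ Δ) :
    ∃ π : Measure ((EuclideanSpace ℝ (Fin d) × EuclideanSpace ℝ (Fin d)) ×
                   (EuclideanSpace ℝ (Fin d) × EuclideanSpace ℝ (Fin d))),
      IsProbabilityMeasure π
      ∧ π.map Prod.fst = Measure.map (fun ω => (X ω, W ω)) ℙ
      ∧ π.map Prod.snd = (Measure.map X ℙ).prod (Measure.map W ℙ)
      ∧ Real.sqrt (∫ pq, (‖pq.1.1 - pq.2.1‖ ^ 2 + ‖pq.1.2 - pq.2.2‖ ^ 2) ∂π)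
          ≤ 2 * Real.sqrt Δ := by
  set P := resampleGiven ℙ X Y hY
  let F : Ω × EuclideanSpace ℝ (Fin d) → _ := fun q ↦ ((X q.1, W q.1), (q.2, W q.1))
  have hF : Measurable F := by fun_prop
  refine ⟨P.map F, Measure.isProbabilityMeasure_map hF.aemeasurable, ?_, ?_, ?_⟩
  · rw [Measure.map_map measurable_fst hF,
      ← (measurePreserving_fst_resampleGiven hY (X := X) (μ := ℙ)).map_eq,
      Measure.map_map (hX.prodMk hW) measurable_fst]
    rfl
  · rw [Measure.map_map measurable_snd hF]
    exact map_resampleGiven_eq_prod_of_indepFun hY hX.aemeasurable hW hindep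
  · have hcost : ∫ pq, (‖pq.1.1 - pq.2.1‖ ^ 2 + ‖pq.1.2 - pq.2.2‖ ^ 2) ∂(P.map F)
        = ∫ q, ‖X q.1 - q.2‖ ^ 2 ∂P := by
      rw [integral_map hF.aemeasurable (by fun_prop)]
      simp [F]
    calc √(∫ pq, (‖pq.1.1 - pq.2.1‖ ^ 2 + ‖pq.1.2 - pq.2.2‖ ^ 2) ∂(P.map F))
        = lpNorm (fun q ↦ X q.1 - q.2) 2 P := by
          rw [hcost, sqrt_integral_norm_sq_eq_lpNorm (by fun_prop)]
      _ ≤ 2 * lpNorm (X - Y) 2 ℙ := lpNorm_sub_resampleGiven_le hX hY one_le_two (hX2.sub hY2)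
      _ ≤ 2 * √Δ := by
          rw [← sqrt_integral_norm_sq_eq_lpNorm (by fun_prop)]
          gcongr
          exact hXY

/-- **Coupling bound against the independent product law.**
If `X, Y, W : Ω → ℝ^d` are square-integrable, `Y` and `W` are independent, and
`E[‖X - Y‖²] ≤ Δ`, then there is a coupling `π` of the joint law of `(X, W)`
and the product `(law of X) ⊗ (law of W)` whose quadratic transport cost
(for the Euclidean product norm on `ℝ^d × ℝ^d`, whose square is the sum of the
squared norms of the components) has square root at most `2√Δ`. -/
theorem coupling_bound_product_law
    {Ω : Type*} [MeasureSpace Ω] [IsProbabilityMeasure (ℙ : Measure Ω)]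
    (d : ℕ) (X Y W : Ω → EuclideanSpace ℝ (Fin d))
    (hX : Measurable X) (hY : Measurable Y) (hW : Measurable W)
    (hX2 : MemLp X 2 ℙ) (hY2 : MemLp Y 2 ℙ) (hW2 : MemLp W 2 ℙ)
    (hindep : IndepFun Y W ℙ)
    (Δ : ℝ) (hΔ : 0 ≤ Δ)
    (hXY : ∫ ω, ‖X ω - Y ω‖ ^ 2 ∂ℙ ≤ Δ) :
    ∃ π : Measure ((EuclideanSpace ℝ (Fin d) × EuclideanSpace ℝ (Fin d)) ×
                   (EuclideanSpace ℝ (Fin d) × EuclideanSpace ℝ (Fin d))),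
      IsProbabilityMeasure π
      ∧ π.map Prod.fst = Measure.map (fun ω => (X ω, W ω)) ℙ
      ∧ π.map Prod.snd = (Measure.map X ℙ).prod (Measure.map W ℙ)
      ∧ Real.sqrt (∫ pq, (‖pq.1.1 - pq.2.1‖ ^ 2 + ‖pq.1.2 - pq.2.2‖ ^ 2) ∂π)
          ≤ 2 * Real.sqrt Δ :=
  coupling_bound_product_law_general d X Y W hX hY hW hX2 hY2 hindep Δ hXY
end
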